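/- arXiv:2201.00421 — 4 statements merged into one kernel-verified Lean document; each statement's English description precedes it below -/
import Mathlib

section
/- Let A and B be unital C*-algebras, G a group acting on A by *-automorphisms α, and φ a G-invariant state on A with covariant GNS representation (H_φ, π_φ, U_φ, ξ_φ). If the subspace E_φ H_φ of U_φ(G)-invariant vectors is one-dimensional, then {π_φ(A) ∪ U_φ(G)}' = ℂ·1. -/
/-! An operator `T` in the commutant maps the `U(G)`-invariant vector `ξ` to an invariant vector,
hence to some `c • ξ`; commuting with `π(A)`, it then agrees with `c • 1` on the dense set
`π(A) ξ`. -/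

theorem ContinuousLinearMap.eq_smul_one_of_apply_cyclic_eq_smul {𝕜 E ι : Type*}
    [NormedField 𝕜] [NormedAddCommGroup E] [NormedSpace 𝕜 E]
    {π : ι → E →L[𝕜] E} {ξ : E} (hcyc : DenseRange fun a => π a ξ)
    {T : E →L[𝕜] E} (hT : ∀ a, T * π a = π a * T) {c : 𝕜} (hTξ : T ξ = c • ξ) :
    T = c • (1 : E →L[𝕜] E) := by
  refine DFunLike.coe_injective <|
    hcyc.equalizer T.continuous (c • (1 : E →L[𝕜] E)).continuous (funext fun a => ?_)
  change T (π a ξ) = c • π a ξ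
  rw [← mul_apply_eq_comp, hT a, mul_apply_eq_comp, hTξ, map_smul]

theorem deFinetti_stmt5_general
    (A : Type) [CStarAlgebra A]
    (G : Type)
    (H : Type) [NormedAddCommGroup H] [InnerProductSpace ℂ H] [CompleteSpace H]
    (π : A →⋆ₐ[ℂ] (H →L[ℂ] H)) (ξ : H)
    (hcyc : Dense {x : H | ∃ a, π a ξ = x})
    (U : G → (H →L[ℂ] H))
    (hUξ : ∀ g, U g ξ = ξ)
    (hdim : ∀ x : H, (∀ g, U g x = x) → ∃ c : ℂ, x = c • ξ) :
    ∀ T : H →L[ℂ] H, (∀ a, T * π a = π a * T) → (∀ g, T * U g = U g * T) →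
      ∃ c : ℂ, T = c • (1 : H →L[ℂ] H) := by
  intro T hTπ hTU
  have hTξ_fixed : ∀ g, U g (T ξ) = T ξ := fun g => by
    rw [← mul_apply_eq_comp, ← hTU g, mul_apply_eq_comp, hUξ]
  obtain ⟨c, hc⟩ := hdim (T ξ) hTξ_fixed
  exact ⟨c, ContinuousLinearMap.eq_smul_one_of_apply_cyclic_eq_smul
    (π := fun a => π a) hcyc hTπ hc⟩

/-- Let `G` act on a unital C*-algebra `A` by *-automorphisms, let `φ` be a
`G`-invariant state with covariant GNS representation `(H, π, U, ξ)`. If the space of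
`U(G)`-invariant vectors is one-dimensional (spanned by the cyclic vector `ξ`), then the
commutant of `π(A) ∪ U(G)` consists of the scalars. -/
theorem deFinetti_stmt5
    (A : Type) [CStarAlgebra A]
    (G : Type) [Group G]
    (α : G → A ≃⋆ₐ[ℂ] A) (hα : ∀ g h a, α (g * h) a = α g (α h a))
    (H : Type) [NormedAddCommGroup H] [InnerProductSpace ℂ H] [CompleteSpace H]
    (π : A →⋆ₐ[ℂ] (H →L[ℂ] H)) (ξ : H) (hξ : ‖ξ‖ = 1)
    (φ : A → ℂ) (hφ : ∀ a, φ a = (inner ℂ ξ (π a ξ) : ℂ))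
    (hφinv : ∀ g a, φ (α g a) = φ a)
    (hcyc : Dense {x : H | ∃ a, π a ξ = x})
    (U : G → (H →L[ℂ] H))
    (hUmul : ∀ g h, U (g * h) = U g * U h)
    (hUunitary : ∀ g, U g ∈ unitary (H →L[ℂ] H))
    (hUξ : ∀ g, U g ξ = ξ)
    (hcov : ∀ g a, U g * π a = π (α g a) * U g)
    (hdim : ∀ x : H, (∀ g, U g x = x) → ∃ c : ℂ, x = c • ξ) :
    ∀ T : H →L[ℂ] H, (∀ a, T * π a = π a * T) → (∀ g, T * U g = U g * T) →
      ∃ c : ℂ, T = c • (1 : H →L[ℂ] H) :=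
  deFinetti_stmt5_general A G H π ξ hcyc U hUξ hdim
end

section
/- Let G be a group acting by *-automorphisms on a unital C*-algebra A and let φ be a G-invariant state with covariant GNS quadruple (H_φ, π_φ, U_φ, ξ_φ). Then φ is extremal in the compact convex set of G-invariant states if and only if {π_φ(A) ∪ U_φ(G)}' = ℂ·1. -/
open scoped ComplexOrder

/-- A state on a unital complex *-algebra, written as a plain function. -/
def IsStateOn {R : Type*} [Ring R] [Algebra ℂ R] [StarRing R] (f : R → ℂ) : Prop :=
  (∀ x y, f (x + y) = f x + f y) ∧ (∀ (c : ℂ) (x), f (c • x) = c * f x) ∧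
    f 1 = 1 ∧ ∀ x, 0 ≤ f (star x * x)

/-
If `φ = t ψ₁ + (1 - t) ψ₂` with invariant states `ψᵢ`, then `t ψ₁ ≤ φ`, so by Cauchy–Schwarz the
form `(a, b) ↦ ψ₁ (a⋆ b)` is bounded by the GNS inner product and is implemented by an operator
`T` commuting with `π(A)`, and with `U(G)` because `ψ₁` is invariant. A trivial commutant makes
`T` scalar, whence `ψ₁ = φ`, and then `ψ₂ = φ`.

Conversely, a self-adjoint `S` in the commutant, shifted and rescaled to some `P` with
`0 ≤ P ≤ 1` and `0 < t = ⟪ξ, P ξ⟫ < 1`, splits `φ` as `t ψ₁ + (1 - t) ψ₂`, where `ψ₁` and `ψ₂` are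
the invariant vector states of `t⁻¹ P` and `(1 - t)⁻¹ (1 - P)`. Extremality gives `ψ₁ = φ`, and
cyclicity of `ξ` then forces `P = t`. A general element of the commutant is scalar since its real
and imaginary parts are.
-/

open ComplexConjugate InnerProductSpace

namespace IsStateOn

variable {R : Type*} [Ring R] [Algebra ℂ R] [StarRing R] {f : R → ℂ}

lemma im_map_star_mul_self (hf : IsStateOn f) (x : R) : (f (star x * x)).im = 0 :=
  (Complex.nonneg_iff.mp (hf.2.2.2 x)).2.symm

lemma re_map_star_mul_self_nonneg (hf : IsStateOn f) (x : R) : 0 ≤ (f (star x * x)).re :=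
  (Complex.nonneg_iff.mp (hf.2.2.2 x)).1

lemma mul_re_map_star_mul_self_le {φ ψ : R → ℂ} (hf : IsStateOn f) {t : ℝ} (ht : t ≤ 1)
    (hφ : ∀ a, φ a = t * ψ a + (1 - t) * f a) (x : R) :
    t * (ψ (star x * x)).re ≤ (φ (star x * x)).re := by
  have := hf.re_map_star_mul_self_nonneg x
  rw [hφ]
  simp only [Complex.add_re, Complex.mul_re, Complex.ofReal_re, Complex.ofReal_im, Complex.sub_re,
    Complex.sub_im, Complex.one_re, Complex.one_im]
  nlinarith

variable [StarModule ℂ R]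

lemma map_star_mul_eq_conj (hf : IsStateOn f) (a b : R) :
    f (star b * a) = conj (f (star a * b)) := by
  have h₁ := hf.im_map_star_mul_self (a + b)
  have h₂ := hf.im_map_star_mul_self (a + Complex.I • b)
  simp only [star_add, star_smul, add_mul, mul_add, smul_mul_assoc, mul_smul_comm, hf.1, hf.2.1,
    Complex.add_im, Complex.mul_im, Complex.mul_re, hf.im_map_star_mul_self, Complex.star_def,
    Complex.conj_I, Complex.I_re, Complex.I_im, Complex.neg_re, Complex.neg_im] at h₁ h₂
  apply Complex.ext <;> simp <;> linarith

abbrev preInnerProductCore (hf : IsStateOn f) : PreInnerProductSpace.Core ℂ R where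
  inner x y := f (star x * y)
  conj_inner_symm x y := (hf.map_star_mul_eq_conj y x).symm
  re_inner_nonneg := hf.re_map_star_mul_self_nonneg
  add_left x y z := by simp only [star_add, add_mul, hf.1]
  smul_left x y r := by simp only [star_smul, smul_mul_assoc, hf.2.1]; rfl

lemma norm_map_star_mul_sq_le (hf : IsStateOn f) (a b : R) :
    ‖f (star a * b)‖ ^ 2 ≤ (f (star a * a)).re * (f (star b * b)).re := by
  have : ‖f (star a * b)‖ * ‖f (star b * a)‖ ≤ (f (star a * a)).re * (f (star b * b)).re :=
    @InnerProductSpace.Core.inner_mul_inner_self_le ℂ R _ _ _ hf.preInnerProductCore a b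
  rwa [hf.map_star_mul_eq_conj a b, RCLike.norm_conj, ← sq] at this

lemma norm_map_star_mul_le (hf : IsStateOn f) {E : Type*} [SeminormedAddCommGroup E] (L : R → E)
    {C : ℝ} (hC : 0 ≤ C) (hle : ∀ x, (f (star x * x)).re ≤ C * ‖L x‖ ^ 2) (a b : R) :
    ‖f (star a * b)‖ ≤ C * ‖L a‖ * ‖L b‖ := by
  refine (pow_le_pow_iff_left₀ (norm_nonneg _) (by positivity) two_ne_zero).mp ?_
  calc ‖f (star a * b)‖ ^ 2 ≤ (f (star a * a)).re * (f (star b * b)).re :=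
        hf.norm_map_star_mul_sq_le a b
    _ ≤ (C * ‖L a‖ ^ 2) * (C * ‖L b‖ ^ 2) :=
        mul_le_mul (hle a) (hle b) (hf.re_map_star_mul_self_nonneg b) (by positivity)
    _ = (C * ‖L a‖ * ‖L b‖) ^ 2 := by ring

end IsStateOn

lemma Commute.star_right_of_mem_unitary {B : Type*} [Monoid B] [StarMul B] {a u : B}
    (h : Commute a u) (hu : u ∈ unitary B) : Commute a (star u) :=
  calc a * star u = star u * u * a * star u := by rw [Unitary.star_mul_self_of_mem hu, one_mul]
    _ = star u * a * (u * star u) := by rw [mul_assoc (star u) u a, ← h.eq]; simp only [mul_assoc]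
    _ = star u * a := by rw [Unitary.mul_star_self_of_mem hu, mul_one]

open scoped ComplexStarModule in
lemma StarSubalgebra.exists_eq_smul_one_of_isSelfAdjoint {B : Type*} [Ring B] [StarRing B]
    [Algebra ℂ B] [StarModule ℂ B] (S : StarSubalgebra ℂ B)
    (h : ∀ x ∈ S, IsSelfAdjoint x → ∃ c : ℂ, x = c • 1) {x : B} (hx : x ∈ S) :
    ∃ c : ℂ, x = c • 1 := by
  have hre : (ℜ x : B) ∈ S := by
    rw [realPart_apply_coe, ← Complex.coe_smul]
    exact S.smul_mem (add_mem hx (star_mem hx)) _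
  have him : (ℑ x : B) ∈ S := by
    rw [imaginaryPart_apply_coe, ← Complex.coe_smul]
    exact S.smul_mem (S.smul_mem (sub_mem hx (star_mem hx)) _) _
  obtain ⟨c₁, hc₁⟩ := h _ hre (ℜ x).2
  obtain ⟨c₂, hc₂⟩ := h _ him (ℑ x).2
  refine ⟨c₁ + Complex.I * c₂, ?_⟩
  rw [← realPart_add_I_smul_imaginaryPart x, hc₁, hc₂, smul_smul, add_smul]

section DenseRange

variable {𝕜 E H : Type*} [RCLike 𝕜] [NormedAddCommGroup H] [InnerProductSpace 𝕜 H]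

lemma ContinuousLinearMap.ext_inner_of_denseRange {ι : Type*} {v : ι → H} (hv : DenseRange v)
    {X Y : H →L[𝕜] H} (h : ∀ i j, inner 𝕜 (v i) (X (v j)) = inner 𝕜 (v i) (Y (v j))) : X = Y := by
  have hXY : ∀ j, X (v j) = Y (v j) := fun j ↦ ext_inner_left 𝕜 fun w ↦ congrFun
    (hv.equalizer (continuous_id.inner continuous_const) (continuous_id.inner continuous_const)
      (funext fun i ↦ h i j)) w
  exact ContinuousLinearMap.coeFn_injective (hv.equalizer X.continuous Y.continuous (funext hXY))

variable [AddCommGroup E] [Module 𝕜 E] [CompleteSpace H]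

theorem exists_inner_apply_eq_of_denseRange {L : E →ₗ[𝕜] H} (hL : DenseRange L)
    (B : E →ₗ⋆[𝕜] E →ₗ[𝕜] 𝕜) {C : ℝ} (hC : 0 ≤ C) (hB : ∀ x y, ‖B x y‖ ≤ C * ‖L x‖ * ‖L y‖) :
    ∃ T : H →L[𝕜] H, ∀ x y, inner 𝕜 (L x) (T (L y)) = B x y := by
  have hF (x y : E) : (B x).extendOfNorm L (L y) = B x y :=
    LinearMap.extendOfNorm_eq hL ⟨_, hB x⟩ y
  let F : E →ₗ⋆[𝕜] StrongDual 𝕜 H :=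
    { toFun x := (B x).extendOfNorm L
      map_add' x x' := LinearMap.extendOfNorm_unique hL _ (hB (x + x')) _ <| by
        ext y; simp [hF]
      map_smul' c x := LinearMap.extendOfNorm_unique hL _ (hB (c • x)) _ <| by
        ext y; simp [hF] }
  let V : E →ₗ[𝕜] H := (toDual 𝕜 H).symm.toLinearEquiv.toLinearMap.comp F
  have hV (x y : E) : inner 𝕜 (V x) (L y) = B x y := by
    simp [V, F, toDual_symm_apply, hF]
  have hVnorm (x : E) : ‖V x‖ ≤ C * ‖L x‖ := by
    simpa [V, F] using LinearMap.opNorm_extendOfNorm_le hL (by positivity) (hB x)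
  refine ⟨(V.extendOfNorm L).adjoint, fun x y ↦ ?_⟩
  rw [ContinuousLinearMap.adjoint_inner_right, LinearMap.extendOfNorm_eq hL ⟨C, hVnorm⟩, hV]

end DenseRange

section SelfAdjoint

variable {H : Type*} [NormedAddCommGroup H] [InnerProductSpace ℂ H] [CompleteSpace H]

lemma IsSelfAdjoint.isPositive_add_smul_one {S : H →L[ℂ] H} (hS : IsSelfAdjoint S) {r : ℝ}
    (hr : ‖S‖ ≤ r) : (S + (r : ℂ) • 1).IsPositive := by
  have h : S + (r : ℂ) • 1 = (S + algebraMap ℝ _ ‖S‖) + ((r - ‖S‖ : ℝ) : ℂ) • 1 := by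
    rw [Algebra.algebraMap_eq_smul_one, ← Complex.coe_smul]
    push_cast
    module
  rw [h]
  exact ((ContinuousLinearMap.nonneg_iff_isPositive _).mp
    (neg_le_iff_add_nonneg.mp hS.neg_algebraMap_norm_le_self)).add
    (ContinuousLinearMap.isPositive_one.smul_of_nonneg (Complex.zero_le_real.mpr (by linarith)))

lemma IsSelfAdjoint.inner_add_smul_one_pos {S : H →L[ℂ] H} (hS : IsSelfAdjoint S) {r : ℝ}
    (hr : ‖S‖ < r) {ξ : H} (hξ : ‖ξ‖ = 1) : 0 < inner ℂ ξ ((S + (r : ℂ) • 1) ξ) := by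
  have h : inner ℂ ξ ((S + (r : ℂ) • 1) ξ) =
      inner ℂ ξ ((S + (‖S‖ : ℂ) • 1) ξ) + ((r - ‖S‖ : ℝ) : ℂ) := by
    simp [hξ]
  rw [h]
  exact add_pos_of_nonneg_of_pos ((hS.isPositive_add_smul_one le_rfl).inner_nonneg_right ξ)
    (Complex.zero_lt_real.mpr (by linarith))

end SelfAdjoint

section Representation

variable {A H : Type*} [Ring A] [StarRing A] [Algebra ℂ A]
  [NormedAddCommGroup H] [InnerProductSpace ℂ H] [CompleteSpace H]
  (π : A →⋆ₐ[ℂ] (H →L[ℂ] H)) {ξ : H}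

lemma inner_map_star_apply (a : A) (x y : H) :
    inner ℂ (π (star a) x) y = inner ℂ x (π a y) := by
  rw [map_star, ContinuousLinearMap.star_eq_adjoint, ContinuousLinearMap.adjoint_inner_left]

lemma inner_map_apply_map_of_commute {T : H →L[ℂ] H} (hT : ∀ a, Commute T (π a)) (a b : A)
    (x y : H) : inner ℂ (π b x) (T (π a y)) = inner ℂ x (T (π (star b * a) y)) := by
  have hTz (c : A) (z : H) : π c (T z) = T (π c z) := (DFunLike.congr_fun (hT c).eq z).symm
  rw [← star_star b, inner_map_star_apply, star_star, hTz, map_mul]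
  rfl

lemma ext_of_commute_of_denseRange (hcyc : DenseRange fun a ↦ π a ξ) {T T' : H →L[ℂ] H}
    (hT : ∀ a, Commute T (π a)) (hT' : ∀ a, Commute T' (π a))
    (h : ∀ a, inner ℂ ξ (T (π a ξ)) = inner ℂ ξ (T' (π a ξ))) : T = T' :=
  ContinuousLinearMap.ext_inner_of_denseRange hcyc fun b a ↦ by
    simp only [inner_map_apply_map_of_commute π hT, inner_map_apply_map_of_commute π hT', h]

lemma isStateOn_inner_apply {Q : H →L[ℂ] H} (hQπ : ∀ a, Commute Q (π a)) (hQ : Q.IsPositive)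
    (hQξ : inner ℂ ξ (Q ξ) = 1) : IsStateOn fun a ↦ inner ℂ ξ (Q (π a ξ)) := by
  refine ⟨fun a b ↦ by simp, fun c a ↦ by simp, by simpa using hQξ, fun a ↦ ?_⟩
  change 0 ≤ inner ℂ ξ (Q (π (star a * a) ξ))
  rw [← inner_map_apply_map_of_commute π hQπ]
  exact hQ.inner_nonneg_right _

lemma inner_apply_map_eq_of_mem_unitary {Q u : H →L[ℂ] H} (hu : u ∈ unitary (H →L[ℂ] H))
    (huξ : u ξ = ξ) (hQu : Commute Q u) {a b : A} (hab : u * π a = π b * u) :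
    inner ℂ ξ (Q (π b ξ)) = inner ℂ ξ (Q (π a ξ)) := by
  have hb : π b ξ = u (π a ξ) := by
    simpa [huξ] using (DFunLike.congr_fun hab ξ).symm
  have hQ : Q (u (π a ξ)) = u (Q (π a ξ)) := DFunLike.congr_fun hQu.eq _
  simpa [hb, hQ, huξ] using ContinuousLinearMap.inner_map_map_of_mem_unitary hu ξ (Q (π a ξ))

lemma inner_map_star_mul_self (a : A) : inner ℂ ξ (π (star a * a) ξ) = (‖π a ξ‖ ^ 2 : ℂ) := by
  rw [map_mul]
  change inner ℂ ξ (π (star a) (π a ξ)) = _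
  rw [← inner_map_star_apply, star_star]
  exact inner_self_eq_norm_sq_to_K _

lemma exists_commute_inner_eq_of_le [StarModule ℂ A] (hcyc : DenseRange fun a ↦ π a ξ)
    {ψ : A → ℂ} (hψ : IsStateOn ψ) {C : ℝ} (hC : 0 ≤ C)
    (hle : ∀ a, (ψ (star a * a)).re ≤ C * ‖π a ξ‖ ^ 2) :
    ∃ T : H →L[ℂ] H, (∀ a, Commute T (π a)) ∧
      ∀ a b, inner ℂ (π a ξ) (T (π b ξ)) = ψ (star a * b) := by
  let L : A →ₗ[ℂ] H := { toFun a := π a ξ, map_add' := by simp, map_smul' := by simp }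
  let B : A →ₗ⋆[ℂ] A →ₗ[ℂ] ℂ := LinearMap.mk₂'ₛₗ _ _ (fun a b ↦ ψ (star a * b))
    (by simp [add_mul, hψ.1]) (by simp [hψ.2.1])
    (by simp [mul_add, hψ.1]) (by simp [hψ.2.1])
  obtain ⟨T, hT⟩ : ∃ T : H →L[ℂ] H, ∀ a b, inner ℂ (π a ξ) (T (π b ξ)) = ψ (star a * b) :=
    exists_inner_apply_eq_of_denseRange (L := L) hcyc B hC
    (hψ.norm_map_star_mul_le (fun a ↦ π a ξ) hC hle)
  refine ⟨T, fun c ↦ ContinuousLinearMap.ext_inner_of_denseRange hcyc fun a b ↦ ?_, hT⟩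
  have hmul (x y : A) : π x (π y ξ) = π (x * y) ξ := by simp
  change inner ℂ (π a ξ) (T (π c (π b ξ))) = inner ℂ (π a ξ) (π c (T (π b ξ)))
  rw [hmul, ← star_star c, ← inner_map_star_apply, star_star, hmul, hT, hT, star_mul, star_star,
    mul_assoc]

lemma commute_of_inner_eq_of_invariant (hcyc : DenseRange fun a ↦ π a ξ) {ψ : A → ℂ}
    {T : H →L[ℂ] H} (hT : ∀ a b, inner ℂ (π a ξ) (T (π b ξ)) = ψ (star a * b))
    (β : A ≃⋆ₐ[ℂ] A) (hψ : ∀ a, ψ (β a) = ψ a) {u : H →L[ℂ] H} (hu : u ∈ unitary (H →L[ℂ] H))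
    (huξ : u ξ = ξ) (hcov : ∀ a, u * π a = π (β a) * u) : Commute T u := by
  have hu' (a : A) : u (π a ξ) = π (β a) ξ := by simpa [huξ] using DFunLike.congr_fun (hcov a) ξ
  refine ContinuousLinearMap.ext_inner_of_denseRange hcyc fun a b ↦ ?_
  obtain ⟨a, rfl⟩ := EquivLike.surjective β a
  change inner ℂ _ (T (u _)) = inner ℂ _ (u (T _))
  rw [hu', hT, ← map_star, ← map_mul, hψ, ← hu',
    ContinuousLinearMap.inner_map_map_of_mem_unitary hu, hT]

end Representation

section Covariant

variable {A H G : Type*} [Ring A] [StarRing A] [Algebra ℂ A]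
  [NormedAddCommGroup H] [InnerProductSpace ℂ H] [CompleteSpace H]
  (π : A →⋆ₐ[ℂ] (H →L[ℂ] H)) {ξ : H} (α : G → A ≃⋆ₐ[ℂ] A) (U : G → H →L[ℂ] H)

def IsExtremeAmongInvariantStates (φ : A → ℂ) : Prop :=
  ∀ ψ₁ ψ₂ : A → ℂ, (IsStateOn ψ₁ ∧ ∀ g a, ψ₁ (α g a) = ψ₁ a) →
    (IsStateOn ψ₂ ∧ ∀ g a, ψ₂ (α g a) = ψ₂ a) → ∀ t : ℝ, 0 < t → t < 1 →
      (∀ a, φ a = (t : ℂ) * ψ₁ a + ((1 : ℂ) - (t : ℂ)) * ψ₂ a) → ψ₁ = φ ∧ ψ₂ = φ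

lemma mem_centralizer_range_union_iff (hU : ∀ g, U g ∈ unitary (H →L[ℂ] H)) {T : H →L[ℂ] H} :
    T ∈ StarSubalgebra.centralizer ℂ (Set.range π ∪ Set.range U) ↔
      (∀ a, Commute T (π a)) ∧ ∀ g, Commute T (U g) := by
  simp only [StarSubalgebra.mem_centralizer_iff, Set.mem_union, Set.mem_range]
  refine ⟨fun h ↦ ⟨fun a ↦ (h _ (.inl ⟨a, rfl⟩)).1.symm, fun g ↦ (h _ (.inr ⟨g, rfl⟩)).1.symm⟩,
    fun ⟨hπ, hU'⟩ ↦ ?_⟩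
  rintro _ (⟨a, rfl⟩ | ⟨g, rfl⟩)
  · exact ⟨(hπ a).eq.symm, by rw [← map_star]; exact (hπ _).eq.symm⟩
  · exact ⟨(hU' g).eq.symm, ((hU' g).star_right_of_mem_unitary (hU g)).eq.symm⟩

theorem eq_inner_of_le_of_commutant_trivial [StarModule ℂ A] (hcyc : DenseRange fun a ↦ π a ξ)
    (hξ : ‖ξ‖ = 1) (hU : ∀ g, U g ∈ unitary (H →L[ℂ] H)) (hUξ : ∀ g, U g ξ = ξ)
    (hcov : ∀ g a, U g * π a = π (α g a) * U g)
    (hcom : ∀ T : H →L[ℂ] H, (∀ a, Commute T (π a)) → (∀ g, Commute T (U g)) →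
      ∃ c : ℂ, T = c • 1)
    {ψ : A → ℂ} (hψ : IsStateOn ψ) (hψα : ∀ g a, ψ (α g a) = ψ a) {C : ℝ} (hC : 0 ≤ C)
    (hle : ∀ a, (ψ (star a * a)).re ≤ C * ‖π a ξ‖ ^ 2) (a : A) : ψ a = inner ℂ ξ (π a ξ) := by
  obtain ⟨T, hTπ, hT⟩ := exists_commute_inner_eq_of_le π hcyc hψ hC hle
  obtain ⟨c, rfl⟩ := hcom T hTπ fun g ↦
    commute_of_inner_eq_of_invariant π hcyc hT (α g) (hψα g) (hU g) (hUξ g) (hcov g)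
  have h (b : A) : ψ b = c * inner ℂ ξ (π b ξ) := by simpa [inner_smul_right] using (hT 1 b).symm
  have hc : c = 1 := by simpa [hψ.2.2.1, hξ] using (h 1).symm
  rw [h, hc, one_mul]

lemma isStateOn_inner_apply_and_invariant (hU : ∀ g, U g ∈ unitary (H →L[ℂ] H))
    (hUξ : ∀ g, U g ξ = ξ) (hcov : ∀ g a, U g * π a = π (α g a) * U g) {Q : H →L[ℂ] H}
    (hQπ : ∀ a, Commute Q (π a)) (hQU : ∀ g, Commute Q (U g)) (hQ : Q.IsPositive)
    (hQξ : inner ℂ ξ (Q ξ) = 1) :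
    IsStateOn (fun a ↦ inner ℂ ξ (Q (π a ξ))) ∧
      ∀ g a, inner ℂ ξ (Q (π (α g a) ξ)) = inner ℂ ξ (Q (π a ξ)) :=
  ⟨isStateOn_inner_apply π hQπ hQ hQξ,
    fun g a ↦ inner_apply_map_eq_of_mem_unitary π (hU g) (hUξ g) (hQU g) (hcov g a)⟩

theorem eq_inner_smul_one_of_extreme (hcyc : DenseRange fun a ↦ π a ξ) (hξ : ‖ξ‖ = 1)
    (hU : ∀ g, U g ∈ unitary (H →L[ℂ] H)) (hUξ : ∀ g, U g ξ = ξ)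
    (hcov : ∀ g a, U g * π a = π (α g a) * U g) {φ : A → ℂ}
    (hφ : ∀ a, φ a = inner ℂ ξ (π a ξ)) (hext : IsExtremeAmongInvariantStates α φ)
    {P : H →L[ℂ] H} (hPπ : ∀ a, Commute P (π a)) (hPU : ∀ g, Commute P (U g))
    (hP : P.IsPositive) (hP' : (1 - P).IsPositive) (h0 : 0 < inner ℂ ξ (P ξ))
    (h1 : inner ℂ ξ (P ξ) < 1) : P = inner ℂ ξ (P ξ) • 1 := by
  obtain ⟨t, ht⟩ : ∃ t : ℝ, inner ℂ ξ (P ξ) = t := ⟨_, Complex.eq_re_of_ofReal_le h0.le⟩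
  rw [ht] at h0 h1 ⊢
  have ht0 : 0 < t := Complex.zero_lt_real.mp h0
  have ht1 : 0 < 1 - t := sub_pos.mpr (by exact_mod_cast h1)
  have ht1' : (1 : ℂ) - t ≠ 0 := by exact_mod_cast ht1.ne'
  set Q₁ : H →L[ℂ] H := ((t⁻¹ : ℝ) : ℂ) • P with hQ₁
  set Q₂ : H →L[ℂ] H := (((1 - t)⁻¹ : ℝ) : ℂ) • (1 - P) with hQ₂
  have hQ₁π (a : A) : Commute Q₁ (π a) := (hPπ a).smul_left _
  have hψ₁ := isStateOn_inner_apply_and_invariant π α U hU hUξ hcov hQ₁π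
    (fun g ↦ (hPU g).smul_left _)
    (hP.smul_of_nonneg (Complex.zero_le_real.mpr (inv_nonneg.mpr ht0.le)))
    (by simp [hQ₁, ht, ht0.ne'])
  have hψ₂ := isStateOn_inner_apply_and_invariant π α U hU hUξ hcov
    (fun a ↦ ((Commute.one_left _).sub_left (hPπ a)).smul_left _)
    (fun g ↦ ((Commute.one_left _).sub_left (hPU g)).smul_left _)
    (hP'.smul_of_nonneg (Complex.zero_le_real.mpr (inv_nonneg.mpr ht1.le)))
    (by simp [ht, hξ]; field_simp)
  have hdec (a : A) : φ a = (t : ℂ) * inner ℂ ξ (Q₁ (π a ξ)) +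
      ((1 : ℂ) - (t : ℂ)) * inner ℂ ξ (Q₂ (π a ξ)) := by
    simp [hQ₁, hQ₂, hφ, ht0.ne']
    field_simp
    ring
  obtain ⟨hψ₁φ, -⟩ := hext _ _ hψ₁ hψ₂ t ht0 (by linarith) hdec
  have hQ₁1 : Q₁ = 1 := ext_of_commute_of_denseRange π hcyc hQ₁π (fun _ ↦ Commute.one_left _)
    fun a ↦ by simpa [hφ] using congrFun hψ₁φ a
  rw [← hQ₁1, hQ₁, smul_smul, ← Complex.ofReal_mul, mul_inv_cancel₀ ht0.ne', Complex.ofReal_one,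
    one_smul]

theorem exists_eq_smul_one_of_isSelfAdjoint_of_extreme (hcyc : DenseRange fun a ↦ π a ξ)
    (hξ : ‖ξ‖ = 1) (hU : ∀ g, U g ∈ unitary (H →L[ℂ] H)) (hUξ : ∀ g, U g ξ = ξ)
    (hcov : ∀ g a, U g * π a = π (α g a) * U g) {φ : A → ℂ}
    (hφ : ∀ a, φ a = inner ℂ ξ (π a ξ))
    (hext : IsExtremeAmongInvariantStates α φ)
    {S : H →L[ℂ] H} (hSπ : ∀ a, Commute S (π a)) (hSU : ∀ g, Commute S (U g))
    (hS : IsSelfAdjoint S) : ∃ c : ℂ, S = c • 1 := by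
  -- `r > ‖S‖` keeps `⟪ξ, P ξ⟫` strictly between `0` and `1`
  set r : ℝ := ‖S‖ + 1
  have hr : ‖S‖ < r := lt_add_one _
  have hr0 : 0 < r := by positivity
  obtain ⟨P, hP⟩ : ∃ P : H →L[ℂ] H, P = (((2 * r)⁻¹ : ℝ) : ℂ) • (S + (r : ℂ) • 1) := ⟨_, rfl⟩
  have hP' : 1 - P = (((2 * r)⁻¹ : ℝ) : ℂ) • (-S + (r : ℂ) • 1) := by
    rw [hP]
    match_scalars
    · field_simp
      ring
    · ring
  have hc : (0 : ℂ) < (((2 * r)⁻¹ : ℝ) : ℂ) := Complex.zero_lt_real.mpr (by positivity)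
  have hSneg : ‖-S‖ < r := by rwa [norm_neg]
  have h0 : 0 < inner ℂ ξ (P ξ) := by
    rw [hP, smul_apply, inner_smul_right]
    exact mul_pos hc (hS.inner_add_smul_one_pos hr hξ)
  have h1 : 0 < inner ℂ ξ ((1 - P) ξ) := by
    rw [hP', smul_apply, inner_smul_right]
    exact mul_pos hc (hS.neg.inner_add_smul_one_pos hSneg hξ)
  have hPpos : P.IsPositive := hP ▸ (hS.isPositive_add_smul_one hr.le).smul_of_nonneg hc.le
  have hPpos' : (1 - P).IsPositive :=
    hP' ▸ (hS.neg.isPositive_add_smul_one hSneg.le).smul_of_nonneg hc.le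
  have hPπ (a : A) : Commute P (π a) :=
    hP ▸ ((hSπ a).add_left ((Commute.one_left _).smul_left _)).smul_left _
  have hPU (g : G) : Commute P (U g) :=
    hP ▸ ((hSU g).add_left ((Commute.one_left _).smul_left _)).smul_left _
  have hPeq := eq_inner_smul_one_of_extreme π α U hcyc hξ hU hUξ hcov hφ hext hPπ hPU hPpos hPpos'
    h0 (by simpa [inner_sub_right, hξ] using h1)
  generalize inner ℂ ξ (P ξ) = z at hPeq
  refine ⟨2 * r * z - r, ?_⟩
  calc S = ((2 * r : ℝ) : ℂ) • P - (r : ℂ) • 1 := by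
        rw [hP, smul_smul, ← Complex.ofReal_mul, mul_inv_cancel₀ (by positivity),
          Complex.ofReal_one, one_smul, add_sub_cancel_right]
    _ = _ := by
        rw [hPeq]
        push_cast
        module

end Covariant

theorem deFinetti_stmt6_general
    (A : Type) [CStarAlgebra A]
    (G : Type)
    (α : G → A ≃⋆ₐ[ℂ] A)
    (H : Type) [NormedAddCommGroup H] [InnerProductSpace ℂ H] [CompleteSpace H]
    (π : A →⋆ₐ[ℂ] (H →L[ℂ] H)) (ξ : H) (hξ : ‖ξ‖ = 1)
    (φ : A → ℂ) (hφ : ∀ a, φ a = (inner ℂ ξ (π a ξ) : ℂ))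
    (hcyc : Dense {x : H | ∃ a, π a ξ = x})
    (U : G → (H →L[ℂ] H))
    (hUunitary : ∀ g, U g ∈ unitary (H →L[ℂ] H))
    (hUξ : ∀ g, U g ξ = ξ)
    (hcov : ∀ g a, U g * π a = π (α g a) * U g) :
    (∀ ψ₁ ψ₂ : A → ℂ,
        (IsStateOn ψ₁ ∧ ∀ g a, ψ₁ (α g a) = ψ₁ a) →
        (IsStateOn ψ₂ ∧ ∀ g a, ψ₂ (α g a) = ψ₂ a) →
        ∀ t : ℝ, 0 < t → t < 1 →
          (∀ a, φ a = (t : ℂ) * ψ₁ a + ((1 : ℂ) - (t : ℂ)) * ψ₂ a) →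
          ψ₁ = φ ∧ ψ₂ = φ) ↔
      (∀ T : H →L[ℂ] H, (∀ a, T * π a = π a * T) → (∀ g, T * U g = U g * T) →
        ∃ c : ℂ, T = c • (1 : H →L[ℂ] H)) := by
  have hK (T : H →L[ℂ] H) := mem_centralizer_range_union_iff π U hUunitary (T := T)
  constructor
  · intro hext T hTπ hTU
    refine StarSubalgebra.exists_eq_smul_one_of_isSelfAdjoint _ (fun S hS hSsa ↦ ?_)
      ((hK T).mpr ⟨hTπ, hTU⟩)
    exact exists_eq_smul_one_of_isSelfAdjoint_of_extreme π α U hcyc hξ hUunitary hUξ hcov hφ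
      hext ((hK S).mp hS).1 ((hK S).mp hS).2 hSsa
  · rintro hcom ψ₁ ψ₂ ⟨hψ₁, hψ₁α⟩ ⟨hψ₂, -⟩ t ht0 ht1 hdec
    have hle (a : A) : (ψ₁ (star a * a)).re ≤ t⁻¹ * ‖π a ξ‖ ^ 2 := by
      rw [le_inv_mul_iff₀ ht0]
      have := hψ₂.mul_re_map_star_mul_self_le ht1.le hdec a
      rwa [hφ, inner_map_star_mul_self, ← Complex.ofReal_pow, Complex.ofReal_re] at this
    have h₁ : ψ₁ = φ := funext fun a ↦
      (eq_inner_of_le_of_commutant_trivial π α U hcyc hξ hUunitary hUξ hcov hcom hψ₁ hψ₁α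
        (inv_nonneg.mpr ht0.le) hle a).trans (hφ a).symm
    have h1t : (1 : ℂ) - t ≠ 0 := sub_ne_zero.mpr (by exact_mod_cast ht1.ne')
    refine ⟨h₁, funext fun a ↦ mul_left_cancel₀ h1t ?_⟩
    have := hdec a
    rw [h₁] at this
    linear_combination -this

/-- Let `G` act on a unital C*-algebra `A` by *-automorphisms and let `φ` be a
`G`-invariant state with covariant GNS representation `(H, π, U, ξ)`. Then `φ` is an extreme
point of the convex set of `G`-invariant states if and only if the commutant of
`π(A) ∪ U(G)` is trivial. -/
theorem deFinetti_stmt6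
    (A : Type) [CStarAlgebra A]
    (G : Type) [Group G]
    (α : G → A ≃⋆ₐ[ℂ] A) (hα : ∀ g h a, α (g * h) a = α g (α h a))
    (H : Type) [NormedAddCommGroup H] [InnerProductSpace ℂ H] [CompleteSpace H]
    (π : A →⋆ₐ[ℂ] (H →L[ℂ] H)) (ξ : H) (hξ : ‖ξ‖ = 1)
    (φ : A → ℂ) (hφ : ∀ a, φ a = (inner ℂ ξ (π a ξ) : ℂ))
    (hφstate : IsStateOn φ) (hφinv : ∀ g a, φ (α g a) = φ a)
    (hcyc : Dense {x : H | ∃ a, π a ξ = x})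
    (U : G → (H →L[ℂ] H))
    (hUmul : ∀ g h, U (g * h) = U g * U h)
    (hUunitary : ∀ g, U g ∈ unitary (H →L[ℂ] H))
    (hUξ : ∀ g, U g ξ = ξ)
    (hcov : ∀ g a, U g * π a = π (α g a) * U g) :
    (∀ ψ₁ ψ₂ : A → ℂ,
        (IsStateOn ψ₁ ∧ ∀ g a, ψ₁ (α g a) = ψ₁ a) →
        (IsStateOn ψ₂ ∧ ∀ g a, ψ₂ (α g a) = ψ₂ a) →
        ∀ t : ℝ, 0 < t → t < 1 →
          (∀ a, φ a = (t : ℂ) * ψ₁ a + ((1 : ℂ) - (t : ℂ)) * ψ₂ a) →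
          ψ₁ = φ ∧ ψ₂ = φ) ↔
      (∀ T : H →L[ℂ] H, (∀ a, T * π a = π a * T) → (∀ g, T * U g = U g * T) →
        ∃ c : ℂ, T = c • (1 : H →L[ℂ] H)) :=
  deFinetti_stmt6_general A G α H π ξ hξ φ hφ hcyc U hUunitary hUξ hcov
end

section
/- Let (A, α), (B, β) be unital Z₂-graded C*-algebras. The grading automorphism θ₀ = α ⊛ β of the algebraic Fermi tensor product A ⊛₀ B is isometric for the minimal C*-Fermi norm, and hence extends uniquely to an involutive *-automorphism θ of the completed Fermi tensor product A ⊛ B, making (A ⊛ B, θ) a Z₂-graded C*-algebra. -/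
open scoped ComplexOrder TensorProduct

/-- The product functional `ω × φ` on the (algebraic Fermi) tensor product, whose
underlying ℂ-module is identified with `A ⊗[ℂ] B` via `e`. -/
noncomputable def prodFun {A B C : Type*}
    [Ring A] [Algebra ℂ A] [Ring B] [Algebra ℂ B] [AddCommGroup C] [Module ℂ C]
    (e : (A ⊗[ℂ] B) ≃ₗ[ℂ] C) (ω : A →ₗ[ℂ] ℂ) (φ : B →ₗ[ℂ] ℂ) : C → ℂ :=
  fun x => TensorProduct.lift
    (LinearMap.mk₂ ℂ (fun a b => ω a * φ b)
      (fun a a' b => by simp [add_mul])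
      (fun c a b => by simp [smul_eq_mul]; ring)
      (fun a b b' => by simp [mul_add])
      (fun c a b => by simp [smul_eq_mul]; ring)) (e.symm x)

/-- The norm of `π_F c` in the GNS representation of a positive functional `F` on a
unital *-algebra: the supremum over GNS-nonnull vectors `x` of
`√(F(x* c* c x)/F(x* x))`. -/
noncomputable def gnsNorm {C : Type*} [Ring C] [StarRing C] (F : C → ℂ) (c : C) : ℝ :=
  ⨆ x : {x : C // 0 < (F (star x * x)).re},
    Real.sqrt ((F (star x.1 * (star c * (c * x.1)))).re / (F (star x.1 * x.1)).re)

/-- The minimal C*-Fermi norm on the algebraic Fermi tensor product: the supremum over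
all pairs of even states `(ω, φ)` of the GNS operator norms associated to the product
functionals `ω × φ`. -/
noncomputable def minFermiNorm (A B C : Type*)
    [CStarAlgebra A] (α : A ≃⋆ₐ[ℂ] A) [CStarAlgebra B] (β : B ≃⋆ₐ[ℂ] B)
    [Ring C] [StarRing C] [Algebra ℂ C]
    (e : (A ⊗[ℂ] B) ≃ₗ[ℂ] C) (c : C) : ℝ :=
  ⨆ p : {p : (A →ₗ[ℂ] ℂ) × (B →ₗ[ℂ] ℂ) //
      p.1 1 = 1 ∧ (∀ a, 0 ≤ p.1 (star a * a)) ∧ (∀ a, p.1 (α a) = p.1 a) ∧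
      p.2 1 = 1 ∧ (∀ b, 0 ≤ p.2 (star b * b)) ∧ (∀ b, p.2 (β b) = p.2 b)},
    gnsNorm (prodFun e p.1.1 p.1.2) c

set_option linter.unusedSectionVars false

section Aux

variable {A B C : Type*} [CStarAlgebra A] {α : A ≃⋆ₐ[ℂ] A} [CStarAlgebra B] {β : B ≃⋆ₐ[ℂ] B}
  [Ring C] [StarRing C] [Algebra ℂ C] {e : (A ⊗[ℂ] B) ≃ₗ[ℂ] C} {θ₀ : C →ₗ[ℂ] C}

theorem aux_surj (x : C) : ∃ t, e t = x := ⟨e.symm x, e.apply_symm_apply x⟩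

theorem aux_invol (hα : ∀ a, α (α a) = a) (hβ : ∀ b, β (β b) = b)
    (hθ₀ : ∀ (a : A) (b : B), θ₀ (e (a ⊗ₜ[ℂ] b)) = e ((α a) ⊗ₜ[ℂ] (β b))) (x : C) :
    θ₀ (θ₀ x) = x := by
  obtain ⟨t, rfl⟩ := aux_surj (e := e) x
  induction t using TensorProduct.induction_on with
  | zero => simp
  | tmul a b => rw [hθ₀, hθ₀, hα, hβ]
  | add s t hs ht => simp only [map_add, hs, ht]

theorem aux_one (hone : e ((1 : A) ⊗ₜ[ℂ] (1 : B)) = 1)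
    (hθ₀ : ∀ (a : A) (b : B), θ₀ (e (a ⊗ₜ[ℂ] b)) = e ((α a) ⊗ₜ[ℂ] (β b))) :
    θ₀ 1 = 1 := by
  rw [← hone, hθ₀, map_one, map_one]

/-- decomposition into even and odd parts -/
theorem aux_decomp (α : A ≃⋆ₐ[ℂ] A) (hα : ∀ a, α (α a) = a) (a : A) :
    ∃ a₁ a₂ : A, α a₁ = a₁ ∧ α a₂ = -a₂ ∧ a₁ + a₂ = a := by
  refine ⟨(2:ℂ)⁻¹ • (a + α a), (2:ℂ)⁻¹ • (a - α a), ?_, ?_, ?_⟩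
  · rw [map_smul, map_add, hα, add_comm]
  · rw [map_smul, map_sub, hα, ← smul_neg, neg_sub]
  · rw [← smul_add]
    module

theorem aux_star_case
    (hstar₁ : ∀ (a : A) (b : B), (α a = a ∨ β b = b) →
      star (e (a ⊗ₜ[ℂ] b)) = e ((star a) ⊗ₜ[ℂ] (star b)))
    (hstar₂ : ∀ (a : A) (b : B), α a = -a → β b = -b →
      star (e (a ⊗ₜ[ℂ] b)) = -e ((star a) ⊗ₜ[ℂ] (star b)))
    (hθ₀ : ∀ (a : A) (b : B), θ₀ (e (a ⊗ₜ[ℂ] b)) = e ((α a) ⊗ₜ[ℂ] (β b)))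
    (a : A) (b : B) (ha : α a = a ∨ α a = -a) (hb : β b = b ∨ β b = -b) :
    θ₀ (star (e (a ⊗ₜ[ℂ] b))) = star (θ₀ (e (a ⊗ₜ[ℂ] b))) := by
  rw [hθ₀]
  rcases ha with ha | ha
  · rw [hstar₁ a b (Or.inl ha), hθ₀, hstar₁ (α a) (β b) (Or.inl (by simp [ha])),
      map_star, map_star]
  · rcases hb with hb | hb
    · rw [hstar₁ a b (Or.inr hb), hθ₀, hstar₁ (α a) (β b) (Or.inr (by simp [hb])),
        map_star, map_star]
    · rw [hstar₂ a b ha hb, map_neg, hθ₀,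
        hstar₂ (α a) (β b) (by simp [ha]) (by simp [hb]), map_star, map_star]

theorem aux_star (hα : ∀ a, α (α a) = a) (hβ : ∀ b, β (β b) = b)
    (hstar₁ : ∀ (a : A) (b : B), (α a = a ∨ β b = b) →
      star (e (a ⊗ₜ[ℂ] b)) = e ((star a) ⊗ₜ[ℂ] (star b)))
    (hstar₂ : ∀ (a : A) (b : B), α a = -a → β b = -b →
      star (e (a ⊗ₜ[ℂ] b)) = -e ((star a) ⊗ₜ[ℂ] (star b)))
    (hθ₀ : ∀ (a : A) (b : B), θ₀ (e (a ⊗ₜ[ℂ] b)) = e ((α a) ⊗ₜ[ℂ] (β b)))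
    (x : C) : θ₀ (star x) = star (θ₀ x) := by
  obtain ⟨t, rfl⟩ := aux_surj (e := e) x
  induction t using TensorProduct.induction_on with
  | zero => simp
  | add s t hs ht => simp only [map_add, star_add, hs, ht]
  | tmul a b =>
    obtain ⟨a₁, a₂, ha₁, ha₂, hsa⟩ := aux_decomp α hα a
    obtain ⟨b₁, b₂, hb₁, hb₂, hsb⟩ := aux_decomp β hβ b
    rw [← hsa, ← hsb, TensorProduct.add_tmul, TensorProduct.tmul_add, TensorProduct.tmul_add]
    simp only [map_add, star_add]
    rw [aux_star_case hstar₁ hstar₂ hθ₀ a₁ b₁ (Or.inl ha₁) (Or.inl hb₁),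
      aux_star_case hstar₁ hstar₂ hθ₀ a₁ b₂ (Or.inl ha₁) (Or.inr hb₂),
      aux_star_case hstar₁ hstar₂ hθ₀ a₂ b₁ (Or.inr ha₂) (Or.inl hb₁),
      aux_star_case hstar₁ hstar₂ hθ₀ a₂ b₂ (Or.inr ha₂) (Or.inr hb₂)]

theorem aux_mul_case
    (hmul₁ : ∀ (a a' : A) (b b' : B), (β b = b ∨ α a' = a') →
      e (a ⊗ₜ[ℂ] b) * e (a' ⊗ₜ[ℂ] b') = e ((a * a') ⊗ₜ[ℂ] (b * b')))
    (hmul₂ : ∀ (a a' : A) (b b' : B), β b = -b → α a' = -a' →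
      e (a ⊗ₜ[ℂ] b) * e (a' ⊗ₜ[ℂ] b') = -e ((a * a') ⊗ₜ[ℂ] (b * b')))
    (hθ₀ : ∀ (a : A) (b : B), θ₀ (e (a ⊗ₜ[ℂ] b)) = e ((α a) ⊗ₜ[ℂ] (β b)))
    (a a' : A) (b b' : B) (hb : β b = b ∨ β b = -b) (ha' : α a' = a' ∨ α a' = -a') :
    θ₀ (e (a ⊗ₜ[ℂ] b) * e (a' ⊗ₜ[ℂ] b')) = e ((α a) ⊗ₜ[ℂ] (β b)) * e ((α a') ⊗ₜ[ℂ] (β b')) := by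
  rcases hb with hb | hb
  · rw [hmul₁ a a' b b' (Or.inl hb), hθ₀, hmul₁ (α a) (α a') (β b) (β b') (Or.inl (by simp [hb])),
      map_mul, map_mul]
  · rcases ha' with ha' | ha'
    · rw [hmul₁ a a' b b' (Or.inr ha'), hθ₀,
        hmul₁ (α a) (α a') (β b) (β b') (Or.inr (by simp [ha'])), map_mul, map_mul]
    · rw [hmul₂ a a' b b' hb ha', map_neg, hθ₀,
        hmul₂ (α a) (α a') (β b) (β b') (by simp [hb]) (by simp [ha']),
        map_mul, map_mul]

theorem aux_mul (hα : ∀ a, α (α a) = a) (hβ : ∀ b, β (β b) = b)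
    (hmul₁ : ∀ (a a' : A) (b b' : B), (β b = b ∨ α a' = a') →
      e (a ⊗ₜ[ℂ] b) * e (a' ⊗ₜ[ℂ] b') = e ((a * a') ⊗ₜ[ℂ] (b * b')))
    (hmul₂ : ∀ (a a' : A) (b b' : B), β b = -b → α a' = -a' →
      e (a ⊗ₜ[ℂ] b) * e (a' ⊗ₜ[ℂ] b') = -e ((a * a') ⊗ₜ[ℂ] (b * b')))
    (hθ₀ : ∀ (a : A) (b : B), θ₀ (e (a ⊗ₜ[ℂ] b)) = e ((α a) ⊗ₜ[ℂ] (β b)))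
    (x y : C) : θ₀ (x * y) = θ₀ x * θ₀ y := by
  obtain ⟨s, rfl⟩ := aux_surj (e := e) x
  obtain ⟨t, rfl⟩ := aux_surj (e := e) y
  induction s using TensorProduct.induction_on with
  | zero => simp
  | add s₁ s₂ h₁ h₂ => simp only [map_add, add_mul, h₁, h₂]
  | tmul a b =>
    induction t using TensorProduct.induction_on with
    | zero => simp
    | add t₁ t₂ h₁ h₂ => simp only [map_add, mul_add, h₁, h₂]
    | tmul a' b' =>
      -- decompose b and a'
      obtain ⟨b₁, b₂, hb₁, hb₂, hsb⟩ := aux_decomp β hβ b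
      obtain ⟨a₁, a₂, ha₁, ha₂, hsa⟩ := aux_decomp α hα a'
      rw [hθ₀, hθ₀, ← hsb, ← hsa]
      simp only [map_add, TensorProduct.tmul_add, TensorProduct.add_tmul, mul_add, add_mul]
      rw [aux_mul_case hmul₁ hmul₂ hθ₀ a a₁ b₁ b' (Or.inl hb₁) (Or.inl ha₁),
        aux_mul_case hmul₁ hmul₂ hθ₀ a a₂ b₁ b' (Or.inl hb₁) (Or.inr ha₂),
        aux_mul_case hmul₁ hmul₂ hθ₀ a a₁ b₂ b' (Or.inr hb₂) (Or.inl ha₁),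
        aux_mul_case hmul₁ hmul₂ hθ₀ a a₂ b₂ b' (Or.inr hb₂) (Or.inr ha₂)]

end Aux


section Aux2

variable {A B C : Type*} [CStarAlgebra A] {α : A ≃⋆ₐ[ℂ] A} [CStarAlgebra B] {β : B ≃⋆ₐ[ℂ] B}
  [Ring C] [StarRing C] [Algebra ℂ C] {e : (A ⊗[ℂ] B) ≃ₗ[ℂ] C} {θ₀ : C →ₗ[ℂ] C}

set_option linter.unusedSectionVars false

theorem aux_prod_tmul (ω : A →ₗ[ℂ] ℂ) (φ : B →ₗ[ℂ] ℂ) (a : A) (b : B) :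
    prodFun e ω φ (e (a ⊗ₜ[ℂ] b)) = ω a * φ b := by
  simp [prodFun]

theorem aux_prod_add (ω : A →ₗ[ℂ] ℂ) (φ : B →ₗ[ℂ] ℂ) (x y : C) :
    prodFun e ω φ (x + y) = prodFun e ω φ x + prodFun e ω φ y := by
  simp [prodFun, map_add]

theorem aux_F_theta
    (hθ₀ : ∀ (a : A) (b : B), θ₀ (e (a ⊗ₜ[ℂ] b)) = e ((α a) ⊗ₜ[ℂ] (β b)))
    (ω : A →ₗ[ℂ] ℂ) (φ : B →ₗ[ℂ] ℂ)
    (hω : ∀ a, ω (α a) = ω a) (hφ : ∀ b, φ (β b) = φ b) (x : C) :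
    prodFun e ω φ (θ₀ x) = prodFun e ω φ x := by
  obtain ⟨t, rfl⟩ : ∃ t, e t = x := ⟨e.symm x, e.apply_symm_apply x⟩
  induction t using TensorProduct.induction_on with
  | zero => simp
  | tmul a b => rw [hθ₀, aux_prod_tmul, aux_prod_tmul, hω, hφ]
  | add s t hs ht => rw [map_add, map_add, aux_prod_add, aux_prod_add, hs, ht]

theorem aux_gns (hinvol : ∀ x, θ₀ (θ₀ x) = x)
    (hmul : ∀ x y : C, θ₀ (x * y) = θ₀ x * θ₀ y)
    (hstar : ∀ x : C, θ₀ (star x) = star (θ₀ x))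
    {F : C → ℂ} (hF : ∀ x, F (θ₀ x) = F x) (c : C) :
    gnsNorm F (θ₀ c) = gnsNorm F c := by
  have hxx : ∀ x : C, star (θ₀ x) * θ₀ x = θ₀ (star x * x) := fun x => by
    rw [← hstar, ← hmul]
  have hsq : ∀ x : C, star (θ₀ x) * (star (θ₀ c) * (θ₀ c * θ₀ x))
      = θ₀ (star x * (star c * (c * x))) := fun x => by
    rw [← hstar, ← hstar, ← hmul, ← hmul, ← hmul]
  let σ : {x : C // 0 < (F (star x * x)).re} ≃ {x : C // 0 < (F (star x * x)).re} :=
    { toFun := fun x => ⟨θ₀ x.1, by rw [hxx, hF]; exact x.2⟩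
      invFun := fun x => ⟨θ₀ x.1, by rw [hxx, hF]; exact x.2⟩
      left_inv := fun x => Subtype.ext (hinvol x.1)
      right_inv := fun x => Subtype.ext (hinvol x.1) }
  have key : (fun x : {x : C // 0 < (F (star x * x)).re} =>
      Real.sqrt ((F (star x.1 * (star (θ₀ c) * (θ₀ c * x.1)))).re
        / (F (star x.1 * x.1)).re)) ∘ σ
      = fun x => Real.sqrt ((F (star x.1 * (star c * (c * x.1)))).re
        / (F (star x.1 * x.1)).re) := by
    funext x
    simp only [Function.comp, σ, Equiv.coe_fn_mk]
    rw [hsq, hxx, hF, hF]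
  rw [gnsNorm, gnsNorm, ← sSup_range, ← sSup_range, ← σ.surjective.range_comp, key]

end Aux2


/-- The grading automorphism `θ₀ = α ⊛ β` of the algebraic Fermi tensor
product is isometric for the minimal C*-Fermi norm, and hence extends uniquely to an
involutive *-automorphism of any C*-completion of the algebraic Fermi tensor product
for that norm. -/
theorem deFinetti_stmt9
    (A : Type) [CStarAlgebra A] (α : A ≃⋆ₐ[ℂ] A) (hα : ∀ a, α (α a) = a)
    (B : Type) [CStarAlgebra B] (β : B ≃⋆ₐ[ℂ] B) (hβ : ∀ b, β (β b) = b)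
    (C : Type) [Ring C] [StarRing C] [Algebra ℂ C]
    (e : (A ⊗[ℂ] B) ≃ₗ[ℂ] C)
    (hone : e ((1 : A) ⊗ₜ[ℂ] (1 : B)) = 1)
    (hmul₁ : ∀ (a a' : A) (b b' : B), (β b = b ∨ α a' = a') →
      e (a ⊗ₜ[ℂ] b) * e (a' ⊗ₜ[ℂ] b') = e ((a * a') ⊗ₜ[ℂ] (b * b')))
    (hmul₂ : ∀ (a a' : A) (b b' : B), β b = -b → α a' = -a' →
      e (a ⊗ₜ[ℂ] b) * e (a' ⊗ₜ[ℂ] b') = -e ((a * a') ⊗ₜ[ℂ] (b * b')))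
    (hstar₁ : ∀ (a : A) (b : B), (α a = a ∨ β b = b) →
      star (e (a ⊗ₜ[ℂ] b)) = e ((star a) ⊗ₜ[ℂ] (star b)))
    (hstar₂ : ∀ (a : A) (b : B), α a = -a → β b = -b →
      star (e (a ⊗ₜ[ℂ] b)) = -e ((star a) ⊗ₜ[ℂ] (star b)))
    (θ₀ : C →ₗ[ℂ] C)
    (hθ₀ : ∀ (a : A) (b : B), θ₀ (e (a ⊗ₜ[ℂ] b)) = e ((α a) ⊗ₜ[ℂ] (β b))) :
    (∀ c : C, minFermiNorm A B C α β e (θ₀ c) = minFermiNorm A B C α β e c) ∧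
    (∀ (D : Type) [CStarAlgebra D], ∀ j : C → D,
      (∀ x y, j (x + y) = j x + j y) → (∀ (c : ℂ) (x), j (c • x) = c • j x) →
      (∀ x y, j (x * y) = j x * j y) → (∀ x, j (star x) = star (j x)) →
      j 1 = 1 →
      (∀ x, ‖j x‖ = minFermiNorm A B C α β e x) → DenseRange j →
      ∃ θ : D ≃⋆ₐ[ℂ] D,
        (∀ x, θ (j x) = j (θ₀ x)) ∧ (∀ d, θ (θ d) = d) ∧
          ∀ θ' : D ≃⋆ₐ[ℂ] D, (∀ x, θ' (j x) = j (θ₀ x)) → θ' = θ) := by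
  have hinvol : ∀ x, θ₀ (θ₀ x) = x := aux_invol hα hβ hθ₀
  have hmulC : ∀ x y : C, θ₀ (x * y) = θ₀ x * θ₀ y := aux_mul hα hβ hmul₁ hmul₂ hθ₀
  have hstarC : ∀ x : C, θ₀ (star x) = star (θ₀ x) := aux_star hα hβ hstar₁ hstar₂ hθ₀
  have part1 : ∀ c : C, minFermiNorm A B C α β e (θ₀ c) = minFermiNorm A B C α β e c := by
    intro c
    refine iSup_congr fun p => ?_
    obtain ⟨⟨ω, φ⟩, h1, h2, h3, h4, h5, h6⟩ := p
    exact aux_gns hinvol hmulC hstarC (aux_F_theta hθ₀ ω φ h3 h6) c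
  refine ⟨part1, ?_⟩
  intro D _ j jadd jsmul jmul jstar jone jnorm jdense
  have j0 : j 0 = 0 := by
    have h := jsmul 0 0
    simpa using h
  have jsub : ∀ x y, j (x - y) = j x - j y := by
    intro x y
    have h := jadd (x - y) y
    rw [sub_add_cancel] at h
    rw [eq_sub_iff_add_eq, ← h]
  have hnorm2 : ∀ u v : C, ‖j (θ₀ u) - j (θ₀ v)‖ = ‖j u - j v‖ := by
    intro u v
    rw [← jsub, ← map_sub, jnorm, part1, ← jnorm, jsub]
  have jzn : ∀ u v : C, j u = j v → j (θ₀ u) = j (θ₀ v) := by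
    intro u v h
    have hn : ‖j (θ₀ u) - j (θ₀ v)‖ = 0 := by rw [hnorm2, h, sub_self, norm_zero]
    rw [← sub_eq_zero]
    exact norm_eq_zero.mp hn
  -- the extension machinery
  have hd : Dense (Set.range j) := jdense
  have hdr : DenseRange (Subtype.val : Set.range j → D) := hd.denseRange_val
  set g : Set.range j → D := fun d => j (θ₀ (Classical.choose d.2)) with hg
  have gspec : ∀ (d : Set.range j) (x : C), j x = d.1 → g d = j (θ₀ x) := fun d x hx =>
    jzn _ _ ((Classical.choose_spec d.2).trans hx.symm)
  have gI : Isometry g := by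
    refine Isometry.of_dist_eq fun d d' => ?_
    rw [Subtype.dist_eq, dist_eq_norm, dist_eq_norm]
    calc ‖g d - g d'‖ = ‖j (Classical.choose d.2) - j (Classical.choose d'.2)‖ := hnorm2 _ _
      _ = ‖d.1 - d'.1‖ := by rw [Classical.choose_spec d.2, Classical.choose_spec d'.2]
  have ui : IsUniformInducing (Subtype.val : Set.range j → D) :=
    isometry_subtype_coe.isUniformInducing
  set θf : D → D := (ui.isDenseInducing hdr).extend g with hθf
  have θfc : Continuous θf :=
    (uniformContinuous_uniformly_extend ui hdr gI.uniformContinuous).continuous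
  have θfj : ∀ x, θf (j x) = j (θ₀ x) := by
    intro x
    have h1 := (ui.isDenseInducing hdr).extend_eq gI.continuous ⟨j x, ⟨x, rfl⟩⟩
    exact h1.trans (gspec _ x rfl)
  have ext1 : ∀ {f₁ f₂ : D → D}, Continuous f₁ → Continuous f₂ →
      (∀ x, f₁ (j x) = f₂ (j x)) → ∀ d, f₁ d = f₂ d := fun h1 h2 h d =>
    congrFun (jdense.equalizer h1 h2 (funext h)) d
  have ext2 : ∀ {f₁ f₂ : D × D → D}, Continuous f₁ → Continuous f₂ →
      (∀ x y, f₁ (j x, j y) = f₂ (j x, j y)) → ∀ p, f₁ p = f₂ p := fun h1 h2 h p =>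
    congrFun ((jdense.prodMap jdense).equalizer h1 h2 (funext fun q => h q.1 q.2)) p
  have θinvol : ∀ d, θf (θf d) = d :=
    ext1 (θfc.comp θfc) continuous_id fun x => by
      rw [θfj, θfj, hinvol]
  have θadd : ∀ p : D × D, θf (p.1 + p.2) = θf p.1 + θf p.2 :=
    ext2 (θfc.comp continuous_add)
      ((θfc.comp continuous_fst).add (θfc.comp continuous_snd)) fun x y => by
      show θf (j x + j y) = θf (j x) + θf (j y)
      rw [← jadd, θfj, θfj, θfj, map_add, jadd]
  have θmul : ∀ p : D × D, θf (p.1 * p.2) = θf p.1 * θf p.2 :=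
    ext2 (θfc.comp continuous_mul)
      ((θfc.comp continuous_fst).mul (θfc.comp continuous_snd)) fun x y => by
      show θf (j x * j y) = θf (j x) * θf (j y)
      rw [← jmul, θfj, θfj, θfj, hmulC, jmul]
  have θsmul : ∀ (c : ℂ) (d : D), θf (c • d) = c • θf d := by
    intro c
    refine ext1 (θfc.comp (continuous_const_smul c)) ((continuous_const_smul c).comp θfc)
      fun x => ?_
    show θf (c • j x) = c • θf (j x)
    rw [← jsmul, θfj, θfj, map_smul, jsmul]
  have θstar : ∀ d : D, θf (star d) = star (θf d) :=
    ext1 (θfc.comp continuous_star) (continuous_star.comp θfc) fun x => by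
      show θf (star (j x)) = star (θf (j x))
      rw [← jstar, θfj, θfj, hstarC, jstar]
  let θ : D ≃⋆ₐ[ℂ] D :=
    { toFun := θf
      invFun := θf
      left_inv := θinvol
      right_inv := θinvol
      map_mul' := fun x y => θmul (x, y)
      map_add' := fun x y => θadd (x, y)
      map_smul' := θsmul
      map_star' := θstar }
  refine ⟨θ, fun x => θfj x, θinvol, ?_⟩
  intro θ' h'
  have cont' : Continuous θ' := (NonUnitalStarAlgHom.isometry θ' θ'.injective).continuous
  exact DFunLike.ext θ' θ (ext1 cont' θfc fun x => (h' x).trans (θfj x).symm)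
end

section
/- Let A = ⊛_ℕ B be the infinite minimal Fermi C*-tensor product of a unital Z₂-graded C*-algebra (B, α), with the natural action of the group ℙ of finite permutations of ℕ. Then every ℙ-invariant (symmetric) state ω on A is even: ω ∘ θ = ω, where θ = ⊛_ℕ α is the induced grading on A. -/
open scoped ComplexOrder

/-- The group of finitary permutations of `ℕ` (those moving only finitely many points). -/
def finitaryPerms : Subgroup (Equiv.Perm ℕ) where
  carrier := {g | {k | g k ≠ k}.Finite}
  one_mem' := by
    show Set.Finite {k : ℕ | (1 : Equiv.Perm ℕ) k ≠ k}
    have h : {k : ℕ | (1 : Equiv.Perm ℕ) k ≠ k} = (∅ : Set ℕ) := by ext k; simp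
    rw [h]; exact Set.finite_empty
  mul_mem' := by
    intro g h hg hh
    show Set.Finite {k : ℕ | (g * h) k ≠ k}
    refine Set.Finite.subset (Set.Finite.union hh (hg.preimage h.injective.injOn)) ?_
    intro k hk
    simp only [Set.mem_setOf_eq, Equiv.Perm.mul_apply] at hk
    by_cases hhk : h k = k
    · right
      simp only [Set.mem_preimage, Set.mem_setOf_eq, hhk]
      rwa [hhk] at hk
    · left; exact hhk
  inv_mem' := by
    intro g hg
    show Set.Finite {k : ℕ | g⁻¹ k ≠ k}
    refine Set.Finite.subset (hg.image g) ?_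
    intro k hk
    simp only [Set.mem_setOf_eq] at hk
    exact ⟨g⁻¹ k, by simp only [Set.mem_setOf_eq, show g (g⁻¹ k) = k from Equiv.apply_symm_apply g k]; exact Ne.symm hk,
      Equiv.apply_symm_apply g k⟩

/-!
Call a `β`-homogeneous element of `B` placed at a single site a generator, and a product of
generators a monomial. Splitting `b = (b + β b)/2 + (b - β b)/2` shows that the span of the
monomials is a dense *-subalgebra of `A`, and `θ` multiplies a monomial by `(-1)^k`, `k` the
number of its odd factors. So it suffices that a symmetric state `Ω` vanishes on every odd
monomial `a`. Block permutations move `a` onto pairwise disjoint sets of sites, giving copies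
`a₀, a₁, …` with `Ω aₖ = Ω a`, and the Fermi relations give `aⱼ⋆ aₖ + aₖ aⱼ⋆ = 0` for `j ≠ k`.
For `x = a₀ + ⋯ + aₙ₋₁` the Cauchy–Schwarz inequality then gives
`n² |Ω a|² ≤ Ω (x⋆x + xx⋆) = n Ω (a⋆a + aa⋆)`, hence `Ω a = 0`.
-/

namespace IsStateOn

section Ring

variable {R : Type*} [Ring R] [Algebra ℂ R] [StarRing R] {Ω : R → ℂ}

def toLinearMap (hΩ : IsStateOn Ω) : R →ₗ[ℂ] ℂ where
  toFun := Ω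
  map_add' := hΩ.1
  map_smul' := hΩ.2.1

@[simp]
theorem coe_toLinearMap (hΩ : IsStateOn Ω) : ⇑hΩ.toLinearMap = Ω := rfl

theorem comp_starAlgEquiv (hΩ : IsStateOn Ω) (θ : R ≃⋆ₐ[ℂ] R) : IsStateOn (Ω ∘ θ) :=
  ⟨fun x y => by simp [hΩ.1], fun c x => by simp [hΩ.2.1], by simp [hΩ.2.2.1],
    fun x => by simpa [map_star] using hΩ.2.2.2 (θ x)⟩

end Ring

variable {A : Type*} [CStarAlgebra A] {Ω : A → ℂ}

section SpectralOrder

attribute [local instance] CStarAlgebra.spectralOrder CStarAlgebra.spectralOrderedRing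

noncomputable def toPositiveLinearMap (hΩ : IsStateOn Ω) : A →ₚ[ℂ] ℂ :=
  .mk₀ hΩ.toLinearMap fun x hx => by
    obtain ⟨y, rfl⟩ := CStarAlgebra.nonneg_iff_eq_star_mul_self.mp hx
    exact hΩ.2.2.2 y

theorem continuous (hΩ : IsStateOn Ω) : Continuous Ω :=
  map_continuous hΩ.toPositiveLinearMap

/-- Cauchy–Schwarz in the GNS pre-Hilbert space, applied to `1` and `x`. -/
theorem norm_sq_le (hΩ : IsStateOn Ω) (x : A) : ‖Ω x‖ ^ 2 ≤ (Ω (star x * x)).re := by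
  set f := hΩ.toPositiveLinearMap
  have hnorm_sq (y : A) : ‖f.toPreGNS y‖ ^ 2 = (Ω (star y * y)).re := by
    have h := f.preGNS_norm_sq (f.toPreGNS y)
    change _ = Ω (star y * y) at h
    exact_mod_cast congrArg Complex.re h
  have hinner : inner ℂ (f.toPreGNS 1) (f.toPreGNS x) = Ω x := by
    change Ω (star 1 * x) = Ω x
    rw [star_one, one_mul]
  have hone : ‖f.toPreGNS 1‖ = 1 := by
    rw [← pow_left_inj₀ (norm_nonneg _) zero_le_one two_ne_zero, hnorm_sq, star_one, one_mul,
      hΩ.2.2.1, Complex.one_re, one_pow]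
  rw [← hinner, ← hnorm_sq]
  gcongr
  simpa [hone] using norm_inner_le_norm (𝕜 := ℂ) (f.toPreGNS 1) (f.toPreGNS x)

end SpectralOrder

theorem eq_of_eqOn_of_dense_span {Ω' : A → ℂ} (hΩ : IsStateOn Ω) (hΩ' : IsStateOn Ω') {S : Set A}
    (hS : Dense (Submodule.span ℂ S : Set A)) (h : S.EqOn Ω Ω') : Ω = Ω' :=
  hΩ.continuous.ext_on hS hΩ'.continuous
    (LinearMap.eqOn_span (f := hΩ.toLinearMap) (g := hΩ'.toLinearMap) h)

end IsStateOn

theorem star_sum_mul_sum_add_sum_mul_star_sum {R ι : Type*} [NonUnitalSemiring R] [StarRing R]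
    (s : Finset ι) (a : ι → R)
    (h : Pairwise fun j k => star (a j) * a k + a k * star (a j) = 0) :
    star (∑ k ∈ s, a k) * ∑ k ∈ s, a k + (∑ k ∈ s, a k) * star (∑ k ∈ s, a k) =
      ∑ k ∈ s, (star (a k) * a k + a k * star (a k)) := by
  classical
  rw [star_sum, Finset.sum_mul_sum, Finset.sum_mul_sum, Finset.sum_comm (s := s) (t := s)
    (f := fun i j => a i * star (a j)), ← Finset.sum_add_distrib]
  refine Finset.sum_congr rfl fun j hj => ?_
  rw [← Finset.sum_add_distrib, Finset.sum_eq_single_of_mem j hj]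
  exact fun k _ hkj => h hkj.symm

theorem IsStateOn.eq_zero_of_pairwise_anticommute {A : Type*} [CStarAlgebra A] {Ω : A → ℂ}
    (hΩ : IsStateOn Ω) (a : ℕ → A) (C : ℝ) (hcopy : ∀ k, Ω (a k) = Ω (a 0))
    (hbdd : ∀ k, (Ω (star (a k) * a k + a k * star (a k))).re ≤ C)
    (hanti : Pairwise fun j k => star (a j) * a k + a k * star (a j) = 0) :
    Ω (a 0) = 0 := by
  have hle (n : ℕ) : (n : ℝ) ^ 2 * ‖Ω (a 0)‖ ^ 2 ≤ n * C := by
    set x := ∑ k ∈ Finset.range n, a k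
    have hx : Ω x = n * Ω (a 0) := by
      rw [← hΩ.coe_toLinearMap, map_sum]
      simp [hcopy]
    have hsum : Ω (star x * x + x * star x) =
        ∑ k ∈ Finset.range n, Ω (star (a k) * a k + a k * star (a k)) := by
      rw [star_sum_mul_sum_add_sum_mul_star_sum _ _ hanti, ← hΩ.coe_toLinearMap, map_sum]
    have hxx : 0 ≤ (Ω (x * star x)).re := by
      simpa using (Complex.le_def.mp (hΩ.2.2.2 (star x))).1
    calc (n : ℝ) ^ 2 * ‖Ω (a 0)‖ ^ 2 = ‖Ω x‖ ^ 2 := by rw [hx, norm_mul, mul_pow]; simp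
      _ ≤ (Ω (star x * x)).re := hΩ.norm_sq_le x
      _ ≤ (Ω (star x * x + x * star x)).re := by rw [hΩ.1, Complex.add_re]; linarith
      _ ≤ n * C := by
        rw [hsum, Complex.re_sum]
        simpa using Finset.sum_le_sum fun k (_ : k ∈ Finset.range n) => hbdd k
  by_contra hne
  have hpos : 0 < ‖Ω (a 0)‖ ^ 2 := by positivity
  obtain ⟨n, hn⟩ := exists_nat_gt (C / ‖Ω (a 0)‖ ^ 2)
  have hn' : C < (n + 1) * ‖Ω (a 0)‖ ^ 2 := by
    rw [div_lt_iff₀ hpos] at hn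
    linarith
  have := hle (n + 1)
  push_cast at this
  nlinarith

structure HomogeneousGen {B : Type*} [Ring B] [StarRing B] [Algebra ℂ B] (β : B ≃⋆ₐ[ℂ] B) where
  site : ℕ
  elt : B
  isOdd : Bool
  map_elt : β elt = (-1 : ℂ) ^ isOdd.toNat • elt

namespace HomogeneousGen

variable {B A : Type*} [Ring B] [StarRing B] [Algebra ℂ B] [Ring A] [StarRing A] [Algebra ℂ A]
  {β : B ≃⋆ₐ[ℂ] B}

def eval (ι : ℕ → B →⋆ₐ[ℂ] A) (p : HomogeneousGen β) : A := ι p.site p.elt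

@[simps]
protected def star [StarModule ℂ B] (p : HomogeneousGen β) : HomogeneousGen β where
  site := p.site
  elt := star p.elt
  isOdd := p.isOdd
  map_elt := by rw [map_star, p.map_elt, star_smul]; simp

@[simps]
def relabel (f : ℕ → ℕ) (p : HomogeneousGen β) : HomogeneousGen β :=
  { p with site := f p.site }

end HomogeneousGen

open HomogeneousGen

section Monomials

variable {B A : Type*} [Ring B] [StarRing B] [Algebra ℂ B] [Ring A] [StarRing A] [Algebra ℂ A]

def FermiRelations (β : B ≃⋆ₐ[ℂ] B) (ι : ℕ → B →⋆ₐ[ℂ] A) : Prop :=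
  ∀ p q : HomogeneousGen β, p.site ≠ q.site →
    p.eval ι * q.eval ι = (-1 : ℂ) ^ (p.isOdd.toNat * q.isOdd.toNat) • (q.eval ι * p.eval ι)

theorem FermiRelations.of_comm_of_anticomm {β : B ≃⋆ₐ[ℂ] B} {ι : ℕ → B →⋆ₐ[ℂ] A}
    (hcomm : ∀ i j, i ≠ j → ∀ b b', (β b = b ∨ β b' = b') → ι i b * ι j b' = ι j b' * ι i b)
    (hanti : ∀ i j, i ≠ j → ∀ b b', β b = -b → β b' = -b' → ι i b * ι j b' = -(ι j b' * ι i b)) :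
    FermiRelations β ι := by
  rintro ⟨i, b, s, hb⟩ ⟨j, b', t, hb'⟩ (hij : i ≠ j)
  cases s <;> cases t <;> simp only [eval, Bool.toNat_false, Bool.toNat_true, mul_zero, mul_one,
    pow_zero, pow_one, one_smul, neg_smul] at hb hb' ⊢
  · exact hcomm i j hij b b' (.inl hb)
  · exact hcomm i j hij b b' (.inl hb)
  · exact hcomm i j hij b b' (.inr hb')
  · exact hanti i j hij b b' hb hb'

variable {β : B ≃⋆ₐ[ℂ] B} (ι : ℕ → B →⋆ₐ[ℂ] A)

def monomial (L : List (HomogeneousGen β)) : A := (L.map (eval ι)).prod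

def oddCount (L : List (HomogeneousGen β)) : ℕ := (L.map fun p => p.isOdd.toNat).sum

@[simp]
theorem monomial_nil : monomial ι ([] : List (HomogeneousGen β)) = 1 := rfl

@[simp]
theorem monomial_cons (p : HomogeneousGen β) (L : List (HomogeneousGen β)) :
    monomial ι (p :: L) = p.eval ι * monomial ι L := List.prod_cons

@[simp]
theorem monomial_append (L L' : List (HomogeneousGen β)) :
    monomial ι (L ++ L') = monomial ι L * monomial ι L' := by
  simp [monomial]

@[simp]
theorem oddCount_cons (p : HomogeneousGen β) (L : List (HomogeneousGen β)) :
    oddCount (p :: L) = p.isOdd.toNat + oddCount L := List.sum_cons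

@[simp]
theorem oddCount_map_relabel (f : ℕ → ℕ) (L : List (HomogeneousGen β)) :
    oddCount (L.map (relabel f)) = oddCount L := by
  simp [oddCount, Function.comp_def]

@[simp]
theorem oddCount_reverse_map_star [StarModule ℂ B] (L : List (HomogeneousGen β)) :
    oddCount (L.reverse.map HomogeneousGen.star) = oddCount L := by
  simp [oddCount, Function.comp_def]

theorem map_monomial_eq_monomial_map_relabel {F : Type*} [FunLike F A A] [MonoidHomClass F A A]
    (π : F) (f : ℕ → ℕ) (hπ : ∀ j b, π (ι j b) = ι (f j) b) (L : List (HomogeneousGen β)) :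
    π (monomial ι L) = monomial ι (L.map (relabel f)) := by
  induction L with
  | nil => simp
  | cons p L ih => simp [ih, eval, hπ]

theorem map_monomial_eq_neg_one_pow_smul {F : Type*} [FunLike F A A] [MonoidHomClass F A A]
    (θ : F) (hθι : ∀ j b, θ (ι j b) = ι j (β b)) (L : List (HomogeneousGen β)) :
    θ (monomial ι L) = (-1 : ℂ) ^ oddCount L • monomial ι L := by
  induction L with
  | nil => simp [oddCount]
  | cons p L ih =>
    rw [monomial_cons, map_mul, ih, eval, hθι, p.map_elt, map_smul, oddCount_cons, pow_add,
      smul_mul_smul_comm]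

theorem star_monomial [StarModule ℂ B] (L : List (HomogeneousGen β)) :
    star (monomial ι L) = monomial ι (L.reverse.map HomogeneousGen.star) := by
  induction L with
  | nil => simp
  | cons p L ih => simp [ih, eval, map_star]

variable {ι}

theorem FermiRelations.eval_mul_monomial (hF : FermiRelations β ι) (p : HomogeneousGen β)
    (L : List (HomogeneousGen β)) (hL : ∀ q ∈ L, p.site ≠ q.site) :
    p.eval ι * monomial ι L =
      (-1 : ℂ) ^ (p.isOdd.toNat * oddCount L) • (monomial ι L * p.eval ι) := by
  induction L with
  | nil => simp [oddCount]
  | cons q L ih =>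
    rw [monomial_cons, ← mul_assoc, hF p q (hL q List.mem_cons_self), smul_mul_assoc, mul_assoc,
      ih fun r hr => hL r (List.mem_cons_of_mem q hr), mul_smul_comm, smul_smul, ← mul_assoc,
      oddCount_cons, mul_add, pow_add]

theorem FermiRelations.monomial_mul_monomial (hF : FermiRelations β ι)
    (L L' : List (HomogeneousGen β)) (hLL' : ∀ p ∈ L, ∀ q ∈ L', p.site ≠ q.site) :
    monomial ι L * monomial ι L' =
      (-1 : ℂ) ^ (oddCount L * oddCount L') • (monomial ι L' * monomial ι L) := by
  induction L with
  | nil => simp [oddCount]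
  | cons p L ih =>
    rw [monomial_cons, mul_assoc, ih fun r hr => hLL' r (List.mem_cons_of_mem p hr), mul_smul_comm,
      ← mul_assoc, hF.eval_mul_monomial p L' (hLL' p List.mem_cons_self), smul_mul_assoc,
      smul_smul, mul_assoc, oddCount_cons, add_mul, pow_add, mul_comm ((-1 : ℂ) ^ (oddCount L * _))]

theorem FermiRelations.star_monomial_mul_add_eq_zero [StarModule ℂ B] (hF : FermiRelations β ι)
    {L L' : List (HomogeneousGen β)} (hL : Odd (oddCount L)) (hL' : Odd (oddCount L'))
    (hLL' : ∀ p ∈ L, ∀ q ∈ L', p.site ≠ q.site) :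
    star (monomial ι L) * monomial ι L' + monomial ι L' * star (monomial ι L) = 0 := by
  rw [star_monomial, hF.monomial_mul_monomial, oddCount_reverse_map_star,
    (hL.mul hL').neg_one_pow, neg_one_smul, neg_add_cancel]
  simpa using hLL'

variable (β ι) in
def monomialSpan : Submodule ℂ A := Submodule.span ℂ (Set.range (monomial (β := β) ι))

variable (ι)

theorem ι_mem_monomialSpan (hβ : ∀ b, β (β b) = b) (j : ℕ) (b : B) :
    ι j b ∈ monomialSpan β ι := by
  let e : HomogeneousGen β := ⟨j, (2⁻¹ : ℂ) • (b + β b), false, by simp [hβ, add_comm]⟩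
  let o : HomogeneousGen β := ⟨j, (2⁻¹ : ℂ) • (b - β b), true, by simp [hβ, ← smul_neg]⟩
  have hb : ι j b = monomial ι [e] + monomial ι [o] := by
    simp only [monomial_cons, monomial_nil, mul_one, eval, e, o, ← map_add, ← smul_add,
      add_add_sub_cancel, ← two_smul ℂ, smul_smul]
    norm_num
  rw [hb]
  exact add_mem (Submodule.subset_span ⟨_, rfl⟩) (Submodule.subset_span ⟨_, rfl⟩)

theorem mul_mem_monomialSpan {x y : A} (hx : x ∈ monomialSpan β ι) (hy : y ∈ monomialSpan β ι) :
    x * y ∈ monomialSpan β ι := by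
  have hxy := Submodule.mul_mem_mul hx hy
  rw [monomialSpan, Submodule.span_mul_span] at hxy
  refine Submodule.span_mono ?_ hxy
  rintro _ ⟨_, ⟨L, rfl⟩, _, ⟨L', rfl⟩, rfl⟩
  exact ⟨L ++ L', monomial_append ι L L'⟩

theorem star_mem_monomialSpan [StarModule ℂ B] [StarModule ℂ A] {x : A}
    (hx : x ∈ monomialSpan β ι) : star x ∈ monomialSpan β ι := by
  induction hx using Submodule.span_induction with
  | mem _ h =>
    obtain ⟨L, rfl⟩ := h
    exact Submodule.subset_span ⟨_, (star_monomial ι L).symm⟩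
  | zero => simp
  | add _ _ _ _ hx hy => rw [star_add]; exact add_mem hx hy
  | smul c _ _ hx => rw [star_smul]; exact Submodule.smul_mem _ _ hx

theorem adjoin_subset_monomialSpan [StarModule ℂ B] [StarModule ℂ A] (hβ : ∀ b, β (β b) = b) :
    (StarAlgebra.adjoin ℂ (⋃ j, Set.range (ι j)) : Set A) ⊆ monomialSpan β ι :=
  let S : StarSubalgebra ℂ A :=
    { (monomialSpan β ι).toSubalgebra (Submodule.subset_span ⟨[], monomial_nil ι⟩)
        fun _ _ => mul_mem_monomialSpan ι with
      star_mem' := star_mem_monomialSpan ι }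
  StarAlgebra.adjoin_le (S := S) (by
    rintro _ ⟨_, ⟨j, rfl⟩, b, rfl⟩
    exact ι_mem_monomialSpan ι hβ j b)

end Monomials

def blockSwap (N M : ℕ) (hNM : N ≤ M) : Equiv.Perm ℕ :=
  Function.Involutive.toPerm
    (fun x => if x < N then x + M else if M ≤ x ∧ x < M + N then x - M else x)
    fun x => by dsimp only; split_ifs <;> omega

theorem blockSwap_apply_of_lt {N M : ℕ} (hNM : N ≤ M) {x : ℕ} (hx : x < N) :
    blockSwap N M hNM x = x + M :=
  if_pos hx

theorem blockSwap_mem_finitaryPerms {N M : ℕ} (hNM : N ≤ M) :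
    blockSwap N M hNM ∈ finitaryPerms := by
  refine (Set.finite_Iio (M + N)).subset fun x hx => ?_
  by_contra hge
  apply hx
  change (if x < N then x + M else if M ≤ x ∧ x < M + N then x - M else x) = x
  simp only [Set.mem_Iio] at hge
  split_ifs <;> omega

theorem IsStateOn.apply_monomial_eq_zero_of_odd {B A : Type*} [Ring B] [StarRing B]
    [Algebra ℂ B] [StarModule ℂ B] [CStarAlgebra A] {β : B ≃⋆ₐ[ℂ] B} {ι : ℕ → B →⋆ₐ[ℂ] A}
    (hF : FermiRelations β ι) (act : finitaryPerms → A ≃⋆ₐ[ℂ] A)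
    (hactι : ∀ g j b, act g (ι j b) = ι ((g : Equiv.Perm ℕ) j) b)
    {Ω : A → ℂ} (hΩ : IsStateOn Ω) (hsym : ∀ g x, Ω (act g x) = Ω x)
    {L : List (HomogeneousGen β)} (hL : Odd (oddCount L)) : Ω (monomial ι L) = 0 := by
  obtain ⟨N, hN⟩ : ∃ N, ∀ p ∈ L, p.site < N := ⟨(L.map (·.site)).sum + 1,
    fun p hp => Nat.lt_succ_of_le (List.le_sum_of_mem (List.mem_map_of_mem hp))⟩
  have hNM (k : ℕ) : N ≤ (k + 1) * N := Nat.le_mul_of_pos_left N k.succ_pos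
  let g (k : ℕ) : finitaryPerms :=
    ⟨blockSwap N ((k + 1) * N) (hNM k), blockSwap_mem_finitaryPerms (hNM k)⟩
  let a (k : ℕ) : A := act (g k) (monomial ι L)
  have ha (k : ℕ) : a k = monomial ι (L.map (relabel (g k))) :=
    map_monomial_eq_monomial_map_relabel ι _ _ (hactι (g k)) L
  have hblock (k : ℕ) : ∀ p ∈ L.map (relabel (g k)), p.site / N = k + 1 := by
    simp only [List.mem_map, forall_exists_index, and_imp, forall_apply_eq_imp_iff₂, relabel_site]
    intro p hp
    rw [show (g k : Equiv.Perm ℕ) p.site = p.site + (k + 1) * N from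
      blockSwap_apply_of_lt (hNM k) (hN p hp),
      Nat.add_mul_div_right _ _ (Nat.zero_lt_of_lt (hN p hp)), Nat.div_eq_of_lt (hN p hp),
      zero_add]
  rw [← hsym (g 0)]
  refine hΩ.eq_zero_of_pairwise_anticommute a
    (Ω (star (monomial ι L) * monomial ι L + monomial ι L * star (monomial ι L))).re
    (fun k => by simp only [a, hsym]) (fun k => le_of_eq ?_) fun j k hjk => ?_
  · simp only [a, ← map_star, ← map_mul, ← map_add, hsym]
  · dsimp only
    rw [ha, ha]
    refine hF.star_monomial_mul_add_eq_zero (by simpa) (by simpa) fun p hp q hq hpq => hjk ?_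
    have := hblock j p hp
    rw [hpq, hblock k q hq] at this
    omega

theorem deFinetti_stmt11_general
    (B : Type) [CStarAlgebra B] (β : B ≃⋆ₐ[ℂ] B) (hβ : ∀ b, β (β b) = b)
    (A : Type) [CStarAlgebra A]
    (θ : A ≃⋆ₐ[ℂ] A)
    -- the canonical embeddings of the tensor factors, with dense total range
    (ι : ℕ → B →⋆ₐ[ℂ] A)
    (hθι : ∀ j b, θ (ι j b) = ι j (β b))
    (hdense :
      Dense ((StarAlgebra.adjoin ℂ (⋃ j, Set.range (ι j)) : StarSubalgebra ℂ A) : Set A))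
    -- Fermi (anti)commutation relations between distinct sites
    (hcomm : ∀ i j, i ≠ j → ∀ b b', (β b = b ∨ β b' = b') →
      ι i b * ι j b' = ι j b' * ι i b)
    (hanti : ∀ i j, i ≠ j → ∀ b b', β b = -b → β b' = -b' →
      ι i b * ι j b' = -(ι j b' * ι i b))
    -- the natural action of the finitary permutation group
    (act : finitaryPerms → A ≃⋆ₐ[ℂ] A)
    (hactι : ∀ g j b, act g (ι j b) = ι ((g : Equiv.Perm ℕ) j) b)
    -- a symmetric state
    (Ω : A → ℂ) (hΩ : IsStateOn Ω)
    (hsym : ∀ g x, Ω (act g x) = Ω x) :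
    ∀ x, Ω (θ x) = Ω x := by
  have hF : FermiRelations β ι := .of_comm_of_anticomm hcomm hanti
  refine congrFun <| (hΩ.comp_starAlgEquiv θ).eq_of_eqOn_of_dense_span hΩ
    (hdense.mono (adjoin_subset_monomialSpan ι hβ)) ?_
  rintro _ ⟨L, rfl⟩
  rw [Function.comp_apply, map_monomial_eq_neg_one_pow_smul ι θ hθι, hΩ.2.1]
  rcases Nat.even_or_odd (oddCount L) with heven | hodd
  · rw [heven.neg_one_pow, one_mul]
  · rw [hΩ.apply_monomial_eq_zero_of_odd hF act hactι hsym hodd, mul_zero]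

/-- Every symmetric (finite-permutation invariant) state on the infinite
minimal Fermi C*-tensor product `A = ⊛_ℕ B` of a unital Z₂-graded C*-algebra `(B, β)`
is even with respect to the induced grading `θ = ⊛_ℕ β`. -/
theorem deFinetti_stmt11
    (B : Type) [CStarAlgebra B] (β : B ≃⋆ₐ[ℂ] B) (hβ : ∀ b, β (β b) = b)
    (A : Type) [CStarAlgebra A]
    (θ : A ≃⋆ₐ[ℂ] A) (hθ : ∀ a, θ (θ a) = a)
    -- the canonical embeddings of the tensor factors, with dense total range
    (ι : ℕ → B →⋆ₐ[ℂ] A)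
    (hθι : ∀ j b, θ (ι j b) = ι j (β b))
    (hdense :
      Dense ((StarAlgebra.adjoin ℂ (⋃ j, Set.range (ι j)) : StarSubalgebra ℂ A) : Set A))
    -- Fermi (anti)commutation relations between distinct sites
    (hcomm : ∀ i j, i ≠ j → ∀ b b', (β b = b ∨ β b' = b') →
      ι i b * ι j b' = ι j b' * ι i b)
    (hanti : ∀ i j, i ≠ j → ∀ b b', β b = -b → β b' = -b' →
      ι i b * ι j b' = -(ι j b' * ι i b))
    -- the natural action of the finitary permutation group
    (act : finitaryPerms → A ≃⋆ₐ[ℂ] A)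
    (hactmul : ∀ g h x, act (g * h) x = act g (act h x))
    (hactι : ∀ g j b, act g (ι j b) = ι ((g : Equiv.Perm ℕ) j) b)
    -- a symmetric state
    (Ω : A → ℂ) (hΩ : IsStateOn Ω)
    (hsym : ∀ g x, Ω (act g x) = Ω x) :
    ∀ x, Ω (θ x) = Ω x :=
  deFinetti_stmt11_general B β hβ A θ ι hθι hdense hcomm hanti act hactι Ω hΩ hsym
end
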